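/- arXiv:1902.01008 — 4 statements merged into one kernel-verified Lean document; each statement's English description precedes it below -/
import Mathlib

section
/- For every positive integer n: Σ_{j=1}^n 1/(j^2 + 1) = -1/2 + 1/(2*(n^2+1)) + (4*pi/(exp(4*pi) - 1)) * ∫_0^1 exp(4*pi*u) * cos(2*pi*n*(1-u)) * sin(2*pi*n*u) * cot(2*pi*u) du. -/
open Real Finset MeasureTheory

/-!
Where `sin (2πu) ≠ 0`, i.e. almost everywhere, the telescoping identity
`sin (2nθ) = 2 sin θ ∑_{k<n} cos ((2k+1)θ)` turns `cos (2πn(1-u)) sin (2πnu) cot (2πu)` into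
`½ ∑_{k<n} (cos (4πku) + cos (4π(k+1)u))`. Since
`∫₀¹ e^{4πu} cos (4πku) du = (e^{4π} - 1) / (4π (k² + 1))`, the integral is the trapezoidal sum
`½ ∑_{k<n} (1/(k²+1) + 1/((k+1)²+1))`, which differs from `∑_{j=1}^n 1/(j²+1)` only in its end terms.
-/

theorem sin_two_mul_nat_mul_eq_sum (n : ℕ) (θ : ℝ) :
    sin (2 * n * θ) = 2 * sin θ * ∑ k ∈ range n, cos ((2 * k + 1) * θ) := by
  induction n with
  | zero => simp
  | succ n ih =>
    have step : sin (2 * (n + 1) * θ) = sin (2 * n * θ) + 2 * sin θ * cos ((2 * n + 1) * θ) := by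
      rw [two_mul_sin_mul_cos, show θ - (2 * n + 1) * θ = -(2 * n * θ) by ring, sin_neg,
        show θ + (2 * n + 1) * θ = 2 * (n + 1) * θ by ring]
      ring
    rw [Nat.cast_succ, step, ih, sum_range_succ]
    ring

theorem cos_mul_sin_two_mul_nat_mul_eq_sum (n : ℕ) (θ : ℝ) :
    cos θ * sin (2 * n * θ) =
      sin θ * ∑ k ∈ range n, (cos (2 * k * θ) + cos (2 * (k + 1 : ℕ) * θ)) := by
  simp only [sin_two_mul_nat_mul_eq_sum, mul_sum]
  refine sum_congr rfl fun k _ => ?_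
  have h := two_mul_cos_mul_cos θ ((2 * k + 1) * θ)
  rw [show θ - (2 * k + 1) * θ = -(2 * k * θ) by ring, cos_neg,
    show θ + (2 * k + 1) * θ = 2 * (k + 1) * θ by ring] at h
  push_cast
  linear_combination sin θ * h

theorem cos_mul_sin_mul_cot_eq_sum (n : ℕ) {θ : ℝ} (hθ : sin θ ≠ 0) :
    cos (n * θ) * sin (n * θ) * cot θ =
      (∑ k ∈ range n, (cos (2 * k * θ) + cos (2 * (k + 1 : ℕ) * θ))) / 2 := by
  have h := cos_mul_sin_two_mul_nat_mul_eq_sum n θ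
  rw [mul_assoc, sin_two_mul] at h
  generalize (∑ k ∈ range n, (cos (2 * k * θ) + cos (2 * (k + 1 : ℕ) * θ))) = S at h ⊢
  rw [cot_eq_cos_div_sin]
  field_simp
  linear_combination h

theorem sum_range_add_succ_eq {M : Type*} [AddCommGroup M] (f : ℕ → M) (n : ℕ) :
    ∑ k ∈ range n, (f k + f (k + 1)) = 2 • ∑ j ∈ Icc 1 n, f j + f 0 - f n := by
  induction n with
  | zero => simp
  | succ n ih =>
    rw [sum_range_succ, ih, sum_Icc_succ_top (by omega)]
    abel

theorem hasDerivAt_exp_mul_mul_cos_add_sin (a b x : ℝ) :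
    HasDerivAt (fun u => exp (a * u) * (a * cos (b * u) + b * sin (b * u)))
      ((a ^ 2 + b ^ 2) * (exp (a * x) * cos (b * x))) x := by
  have hlin : ∀ c : ℝ, HasDerivAt (fun u : ℝ => c * u) c x := fun c => by
    simpa using (hasDerivAt_id x).const_mul c
  refine ((hlin a).exp.mul
    (((hlin b).cos.const_mul a).add ((hlin b).sin.const_mul b))).congr_deriv ?_
  simp only [Pi.add_apply]
  ring

theorem mul_integral_exp_mul_mul_cos_mul (a b x y : ℝ) :
    (a ^ 2 + b ^ 2) * ∫ u in x..y, exp (a * u) * cos (b * u) =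
      exp (a * y) * (a * cos (b * y) + b * sin (b * y)) -
        exp (a * x) * (a * cos (b * x) + b * sin (b * x)) := by
  rw [← intervalIntegral.integral_const_mul]
  have hcont : Continuous fun u => (a ^ 2 + b ^ 2) * (exp (a * u) * cos (b * u)) := by fun_prop
  exact intervalIntegral.integral_eq_sub_of_hasDerivAt
    (fun u _ => hasDerivAt_exp_mul_mul_cos_add_sin a b u) (hcont.intervalIntegrable x y)

theorem integral_exp_four_pi_mul_mul_cos (k : ℕ) :
    ∫ u in (0 : ℝ)..1, exp (4 * π * u) * cos (4 * π * k * u) =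
      (exp (4 * π) - 1) / (4 * π) / ((k : ℝ) ^ 2 + 1) := by
  have h := mul_integral_exp_mul_mul_cos_mul (4 * π) (4 * π * k) 0 1
  have hcos : cos (4 * π * k) = 1 := by
    rw [show 4 * π * k = (2 * k : ℕ) * (2 * π) by push_cast; ring, cos_nat_mul_two_pi]
  have hsin : sin (4 * π * k) = 0 := by
    rw [show 4 * π * k = (4 * k : ℕ) * π by push_cast; ring, sin_nat_mul_pi]
  simp only [mul_one, mul_zero, hcos, hsin, exp_zero, cos_zero, sin_zero] at h
  have hπ : (0 : ℝ) < π := pi_pos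
  generalize (∫ u in (0 : ℝ)..1, exp (4 * π * u) * cos (4 * π * k * u)) = I at h ⊢
  field_simp
  apply mul_left_cancel₀ (by positivity : 4 * π ≠ 0)
  linear_combination h

theorem ae_sin_mul_ne_zero {c : ℝ} (hc : c ≠ 0) : ∀ᵐ x : ℝ, sin (c * x) ≠ 0 := by
  refine ((Set.countable_range fun m : ℤ => m * π / c).ae_notMem volume).mono fun x hx h => hx ?_
  obtain ⟨m, hm⟩ := sin_eq_zero_iff.mp h
  exact ⟨m, show m * π / c = x by rw [hm]; field_simp⟩

theorem exp_mul_cos_mul_sin_mul_cot_eq (n : ℕ) {u : ℝ} (hu : sin (2 * π * u) ≠ 0) :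
    exp (4 * π * u) * cos (2 * π * n * (1 - u)) * sin (2 * π * n * u) * cot (2 * π * u) =
      (∑ k ∈ range n, (exp (4 * π * u) * cos (4 * π * k * u) +
        exp (4 * π * u) * cos (4 * π * (k + 1 : ℕ) * u))) / 2 := by
  have hcos : cos (2 * π * n * (1 - u)) = cos (n * (2 * π * u)) := by
    rw [← cos_nat_mul_two_pi_sub (n * (2 * π * u)) n]
    ring_nf
  rw [hcos, show 2 * π * n * u = n * (2 * π * u) by ring, mul_assoc, mul_assoc,
    ← mul_assoc (cos _), cos_mul_sin_mul_cot_eq_sum n hu, mul_div_assoc', mul_sum]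
  congr 1
  refine sum_congr rfl fun k _ => ?_
  ring_nf

theorem integral_sum_exp_mul_cos_add (n : ℕ) :
    ∫ u in (0 : ℝ)..1, (∑ k ∈ range n, (exp (4 * π * u) * cos (4 * π * k * u) +
        exp (4 * π * u) * cos (4 * π * (k + 1 : ℕ) * u))) / 2 =
      (exp (4 * π) - 1) / (4 * π) *
        ((2 * ∑ j ∈ Icc 1 n, 1 / ((j : ℝ) ^ 2 + 1) + 1 - 1 / ((n : ℝ) ^ 2 + 1)) / 2) := by
  have hint (k : ℕ) :
      IntervalIntegrable (fun u => exp (4 * π * u) * cos (4 * π * k * u)) volume 0 1 :=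
    (by fun_prop : Continuous fun u => exp (4 * π * u) * cos (4 * π * k * u)).intervalIntegrable 0 1
  rw [intervalIntegral.integral_div,
    intervalIntegral.integral_finsetSum fun k _ => (hint k).add (hint (k + 1))]
  simp only [intervalIntegral.integral_add (hint _) (hint _)]
  rw [sum_range_add_succ_eq
    (fun k : ℕ => ∫ u in (0 : ℝ)..1, exp (4 * π * u) * cos (4 * π * k * u))]
  simp only [integral_exp_four_pi_mul_mul_cos,
    div_eq_mul_one_div ((exp (4 * π) - 1) / (4 * π)), ← mul_sum]
  push_cast
  ring

theorem sum_one_div_sq_add_one_general (n : ℕ) :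
    ∑ j ∈ Finset.Icc 1 n, 1 / ((j : ℝ) ^ 2 + 1) =
      -1 / 2 + 1 / (2 * ((n : ℝ) ^ 2 + 1)) +
        (4 * Real.pi / (Real.exp (4 * Real.pi) - 1)) *
          ∫ u in (0 : ℝ)..1,
            Real.exp (4 * Real.pi * u) * Real.cos (2 * Real.pi * n * (1 - u)) *
              Real.sin (2 * Real.pi * n * u) * Real.cot (2 * Real.pi * u) := by
  rw [intervalIntegral.integral_congr_ae ((ae_sin_mul_ne_zero (by positivity : 2 * π ≠ 0)).mono
    fun u hu (_ : u ∈ Set.uIoc 0 1) => exp_mul_cos_mul_sin_mul_cot_eq n hu),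
    integral_sum_exp_mul_cos_add]
  have : exp (4 * π) - 1 ≠ 0 := (sub_pos.mpr (one_lt_exp_iff.mpr (by positivity))).ne'
  field_simp
  ring

theorem sum_one_div_sq_add_one (n : ℕ) (hn : 0 < n) :
    ∑ j ∈ Finset.Icc 1 n, 1 / ((j : ℝ) ^ 2 + 1) =
      -1 / 2 + 1 / (2 * ((n : ℝ) ^ 2 + 1)) +
        (4 * Real.pi / (Real.exp (4 * Real.pi) - 1)) *
          ∫ u in (0 : ℝ)..1,
            Real.exp (4 * Real.pi * u) * Real.cos (2 * Real.pi * n * (1 - u)) *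
              Real.sin (2 * Real.pi * n * u) * Real.cot (2 * Real.pi * u) :=
  sum_one_div_sq_add_one_general n
end

section
/- For every positive integer n: Σ_{j=1}^n 1/(j^2 + 2*j + 2) = -1/4 + 1/(2*(n^2 + 2*n + 2)) + (2*pi/(exp(4*pi) - 1)) * ∫_0^1 (exp(4*pi*(1-u)) + exp(4*pi*u)) * cos(2*pi*(n+2)*u) * sin(2*pi*n*(1-u)) * cot(2*pi*(1-u)) du. -/
open Real Finset MeasureTheory

lemma aux_sin_expand (n : ℕ) (θ : ℝ) :
    Real.sin (2*(n+1)*θ) * Real.cos θ =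
    Real.sin θ * (1 + 2 * ∑ k ∈ Finset.Icc 1 n, Real.cos (2*k*θ) + Real.cos (2*(n+1)*θ)) := by
  induction n with
  | zero =>
    simp only [Nat.cast_zero, zero_add, Finset.Icc_self]
    norm_num
    rw [show (2:ℝ)*θ = θ + θ by ring, Real.sin_add, Real.cos_add]
    ring_nf
    linear_combination (Real.sin θ) * (Real.sin_sq_add_cos_sq θ)
  | succ m ih =>
    have h1 := Real.sin_sub_sin (2*((m:ℝ)+1+1)*θ) (2*((m:ℝ)+1)*θ)
    have e1 : (2*((m:ℝ)+1+1)*θ - 2*((m:ℝ)+1)*θ)/2 = θ := by ring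
    have e2 : (2*((m:ℝ)+1+1)*θ + 2*((m:ℝ)+1)*θ)/2 = (2*(m:ℝ)+3)*θ := by ring
    rw [e1, e2] at h1
    have h2 := Real.cos_add_cos (2*((m:ℝ)+1+1)*θ) (2*((m:ℝ)+1)*θ)
    rw [e2, e1] at h2
    rw [Finset.sum_Icc_succ_top (by omega : 1 ≤ m + 1)]
    push_cast
    push_cast at ih
    linear_combination ih + Real.cos θ * h1 - Real.sin θ * h2

lemma pointwise_eq (n : ℕ) (u : ℝ) (hsin : Real.sin (2*π*(1-u)) ≠ 0) :
    (Real.exp (4*π*(1-u)) + Real.exp (4*π*u)) * Real.cos (2*π*((n:ℝ)+2)*u) *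
      Real.sin (2*π*n*(1-u)) * Real.cot (2*π*(1-u)) =
    (∑ k ∈ Finset.Icc 1 n, (Real.exp (4*π*(1-u)) + Real.exp (4*π*u)) * Real.cos (2*k*(2*π*(1-u))))
      + (1/2) * ((Real.exp (4*π*(1-u)) + Real.exp (4*π*u)) * Real.cos (2*((n:ℝ)+1)*(2*π*(1-u))))
      - (1/2) * ((Real.exp (4*π*(1-u)) + Real.exp (4*π*u)) * Real.cos (2*(2*π*(1-u)))) := by
  set θ : ℝ := 2*π*(1-u) with hθ
  set E : ℝ := Real.exp (4*π*(1-u)) + Real.exp (4*π*u) with hE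
  have hcos : Real.cos (2*π*((n:ℝ)+2)*u) = Real.cos (((n:ℝ)+2)*θ) := by
    have h1 : ((n:ℝ)+2)*θ = ((n+2:ℕ):ℝ)*(2*π) - 2*π*((n:ℝ)+2)*u := by
      rw [hθ]; push_cast; ring
    rw [h1, Real.cos_sub, Real.cos_nat_mul_two_pi,
      show ((n+2:ℕ):ℝ)*(2*π) = ((2*(n+2):ℕ):ℝ)*π by push_cast; ring,
      Real.sin_nat_mul_pi]
    ring
  have hsn : Real.sin (2*π*(n:ℝ)*(1-u)) = Real.sin ((n:ℝ)*θ) := by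
    congr 1; rw [hθ]; ring
  have A := aux_sin_expand n θ
  have B := aux_sin_expand 0 θ
  simp only [Nat.cast_zero, zero_add, show (1:ℕ) - 1 = 0 from rfl] at B
  rw [show Finset.Icc 1 0 = (∅ : Finset ℕ) by rfl] at B
  simp only [Finset.sum_empty, mul_zero, add_zero, mul_one] at B
  have C := Real.sin_sub_sin (2*((n:ℝ)+1)*θ) (2*θ)
  have e1 : (2*((n:ℝ)+1)*θ - 2*θ)/2 = (n:ℝ)*θ := by ring
  have e2 : (2*((n:ℝ)+1)*θ + 2*θ)/2 = ((n:ℝ)+2)*θ := by ring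
  rw [e1, e2] at C
  have key : Real.cos (((n:ℝ)+2)*θ) * Real.sin ((n:ℝ)*θ) * Real.cos θ =
      Real.sin θ * ((∑ k ∈ Finset.Icc 1 n, Real.cos (2*(k:ℝ)*θ))
        + (1/2) * Real.cos (2*((n:ℝ)+1)*θ) - (1/2) * Real.cos (2*θ)) := by
    linear_combination -(Real.cos θ / 2) * C + (1/2) * A - (1/2) * B
  rw [Real.cot_eq_cos_div_sin, hcos, hsn]
  calc E * Real.cos (((n:ℝ)+2)*θ) * Real.sin ((n:ℝ)*θ) * (Real.cos θ / Real.sin θ)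
      = E * ((Real.cos (((n:ℝ)+2)*θ) * Real.sin ((n:ℝ)*θ) * Real.cos θ) / Real.sin θ) := by
        ring
    _ = E * ((Real.sin θ * ((∑ k ∈ Finset.Icc 1 n, Real.cos (2*(k:ℝ)*θ))
        + (1/2) * Real.cos (2*((n:ℝ)+1)*θ) - (1/2) * Real.cos (2*θ))) / Real.sin θ) := by
        rw [key]
    _ = E * ((∑ k ∈ Finset.Icc 1 n, Real.cos (2*(k:ℝ)*θ))
        + (1/2) * Real.cos (2*((n:ℝ)+1)*θ) - (1/2) * Real.cos (2*θ)) := by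
        rw [mul_div_cancel_left₀ _ hsin]
    _ = E * (∑ k ∈ Finset.Icc 1 n, Real.cos (2*(k:ℝ)*θ))
        + (1/2) * (E * Real.cos (2*((n:ℝ)+1)*θ)) - (1/2) * (E * Real.cos (2*θ)) := by ring
    _ = _ := by rw [Finset.mul_sum]

lemma integral_term (k : ℕ) :
    ∫ u in (0:ℝ)..1, (Real.exp (4*π*(1-u)) + Real.exp (4*π*u)) * Real.cos (2*k*(2*π*(1-u)))
      = (Real.exp (4*π) - 1)/(2*π*(1+(k:ℝ)^2)) := by
  set a : ℝ := 4*π with ha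
  set b : ℝ := 4*π*k with hb
  have hD : a^2 + b^2 ≠ 0 := by positivity
  set F : ℝ → ℝ := fun u =>
    (-Real.exp (a*(1-u)) * (a * Real.cos (b*(1-u)) + b * Real.sin (b*(1-u)))
      + Real.exp (a*u) * (a * Real.cos (b*(1-u)) - b * Real.sin (b*(1-u)))) / (a^2+b^2) with hF
  have hderiv : ∀ u ∈ Set.uIcc (0:ℝ) 1, HasDerivAt F
      ((Real.exp (a*(1-u)) + Real.exp (a*u)) * Real.cos (b*(1-u))) u := by
    intro u _
    have h1 : HasDerivAt (fun u : ℝ => a*(1-u)) (-a) u := by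
      simpa using ((hasDerivAt_id u).const_sub 1).const_mul a
    have h2 : HasDerivAt (fun u : ℝ => b*(1-u)) (-b) u := by
      simpa using ((hasDerivAt_id u).const_sub 1).const_mul b
    have h3 : HasDerivAt (fun u : ℝ => a*u) a u := by
      simpa using (hasDerivAt_id u).const_mul a
    have hE1 := h1.exp
    have hE2 := h3.exp
    have hC := h2.cos
    have hS := h2.sin
    have := (((hE1.neg.mul ((hC.const_mul a).add (hS.const_mul b))).add
      (hE2.mul ((hC.const_mul a).sub (hS.const_mul b)))).div_const (a^2+b^2))
    refine this.congr_deriv ?_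
    simp only [Pi.add_apply, Pi.sub_apply, Pi.neg_apply, Pi.mul_apply]
    field_simp
    ring
  have hint : IntervalIntegrable
      (fun u => (Real.exp (a*(1-u)) + Real.exp (a*u)) * Real.cos (b*(1-u)))
      MeasureTheory.volume 0 1 := by
    apply Continuous.intervalIntegrable
    fun_prop
  have := intervalIntegral.integral_eq_sub_of_hasDerivAt hderiv hint
  have harg : ∀ u : ℝ, Real.cos (2*(k:ℝ)*(2*π*(1-u))) = Real.cos (b*(1-u)) := by
    intro u; congr 1; rw [hb]; ring
  rw [show (fun u => (Real.exp (4*π*(1-u)) + Real.exp (4*π*u)) * Real.cos (2*(k:ℝ)*(2*π*(1-u))))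
      = (fun u => (Real.exp (a*(1-u)) + Real.exp (a*u)) * Real.cos (b*(1-u))) from
      funext fun u => by rw [harg u, ha]] at *
  rw [this]
  have hcb : Real.cos b = 1 := by
    rw [hb, show 4*π*(k:ℝ) = (2*k : ℕ) * (2*π) by push_cast; ring]
    exact Real.cos_nat_mul_two_pi (2*k)
  have hsb : Real.sin b = 0 := by
    rw [hb, show 4*π*(k:ℝ) = (4*k : ℕ) * π by push_cast; ring]
    exact Real.sin_nat_mul_pi (4*k)
  rw [hF]
  simp only [mul_one, mul_zero, sub_zero, sub_self]
  norm_num [hcb, hsb]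
  rw [ha, hb]
  have hπ : (π:ℝ) ≠ 0 := Real.pi_ne_zero
  have hk : (1:ℝ) + (k:ℝ)^2 ≠ 0 := by positivity
  field_simp
  ring

lemma sum_shift (n : ℕ) :
    ∑ j ∈ Finset.Icc 1 n, 1 / ((j : ℝ) ^ 2 + 2 * j + 2) =
      (∑ k ∈ Finset.Icc 1 n, 1 / (1 + (k:ℝ)^2)) - 1/2 + 1/(1 + ((n:ℝ)+1)^2) := by
  induction n with
  | zero => norm_num
  | succ m ih =>
    rw [Finset.sum_Icc_succ_top (by omega : 1 ≤ m+1),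
        Finset.sum_Icc_succ_top (by omega : 1 ≤ m+1), ih]
    push_cast
    have h1 : ((m:ℝ)+1)^2 + 2*((m:ℝ)+1) + 2 = 1 + ((m:ℝ)+1+1)^2 := by ring
    rw [h1]
    ring

set_option maxHeartbeats 1000000 in
theorem sum_one_div_quadratic (n : ℕ) (hn : 0 < n) :
    ∑ j ∈ Finset.Icc 1 n, 1 / ((j : ℝ) ^ 2 + 2 * j + 2) =
      -1 / 4 + 1 / (2 * ((n : ℝ) ^ 2 + 2 * n + 2)) +
        (2 * Real.pi / (Real.exp (4 * Real.pi) - 1)) *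
          ∫ u in (0 : ℝ)..1,
            (Real.exp (4 * Real.pi * (1 - u)) + Real.exp (4 * Real.pi * u)) *
              Real.cos (2 * Real.pi * ((n : ℝ) + 2) * u) *
              Real.sin (2 * Real.pi * n * (1 - u)) * Real.cot (2 * Real.pi * (1 - u)) := by
  -- the bad set has measure zero
  have hmeas : volume {u : ℝ | Real.sin (2*π*(1-u)) = 0} = 0 := by
    refine measure_mono_null ?_ ((Set.countable_range (fun m : ℤ => 1 - (m:ℝ)/2)).measure_zero volume)
    intro u hu
    obtain ⟨m, hm⟩ := Real.sin_eq_zero_iff.mp hu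
    refine ⟨m, ?_⟩
    simp only
    have h3 : (m:ℝ)*π = (2 - 2*u)*π := by linear_combination hm
    have h2 : (m:ℝ) = 2 - 2*u := mul_right_cancel₀ Real.pi_ne_zero h3
    linarith
  have hae : ∀ᵐ u : ℝ, u ∉ {u : ℝ | Real.sin (2*π*(1-u)) = 0} :=
    MeasureTheory.measure_eq_zero_iff_ae_notMem.mp hmeas
  have hcongr : (∫ u in (0:ℝ)..1,
      (Real.exp (4*π*(1-u)) + Real.exp (4*π*u)) * Real.cos (2*π*((n:ℝ)+2)*u) *
        Real.sin (2*π*n*(1-u)) * Real.cot (2*π*(1-u))) =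
      ∫ u in (0:ℝ)..1,
        ((∑ k ∈ Finset.Icc 1 n, (Real.exp (4*π*(1-u)) + Real.exp (4*π*u)) * Real.cos (2*k*(2*π*(1-u))))
        + (1/2) * ((Real.exp (4*π*(1-u)) + Real.exp (4*π*u)) * Real.cos (2*((n:ℝ)+1)*(2*π*(1-u))))
        - (1/2) * ((Real.exp (4*π*(1-u)) + Real.exp (4*π*u)) * Real.cos (2*(2*π*(1-u))))) := by
    apply intervalIntegral.integral_congr_ae
    filter_upwards [hae] with u hu _
    exact pointwise_eq n u hu
  rw [hcongr]
  have hi1 : ∀ k : ℕ, IntervalIntegrable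
      (fun u => (Real.exp (4*π*(1-u)) + Real.exp (4*π*u)) * Real.cos (2*(k:ℝ)*(2*π*(1-u))))
      volume 0 1 := fun k => (by fun_prop : Continuous _).intervalIntegrable _ _
  have hi2 : IntervalIntegrable
      (fun u => (Real.exp (4*π*(1-u)) + Real.exp (4*π*u)) * Real.cos (2*((n:ℝ)+1)*(2*π*(1-u))))
      volume 0 1 := (by fun_prop : Continuous _).intervalIntegrable _ _
  have hi3 : IntervalIntegrable
      (fun u => (Real.exp (4*π*(1-u)) + Real.exp (4*π*u)) * Real.cos (2*(2*π*(1-u))))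
      volume 0 1 := (by fun_prop : Continuous _).intervalIntegrable _ _
  have hisum : IntervalIntegrable
      (fun u => ∑ k ∈ Finset.Icc 1 n,
        (Real.exp (4*π*(1-u)) + Real.exp (4*π*u)) * Real.cos (2*(k:ℝ)*(2*π*(1-u))))
      volume 0 1 :=
    (continuous_finset_sum (Finset.Icc 1 n)
      (f := fun (k : ℕ) (u : ℝ) => (Real.exp (4*π*(1-u)) + Real.exp (4*π*u)) * Real.cos (2*(k:ℝ)*(2*π*(1-u))))
      (fun k _ => by fun_prop)).intervalIntegrable _ _
  rw [intervalIntegral.integral_sub (by exact (hisum.add (hi2.const_mul _))) (hi3.const_mul _),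
      intervalIntegral.integral_add hisum (hi2.const_mul _),
      intervalIntegral.integral_finset_sum (fun k _ => hi1 k),
      intervalIntegral.integral_const_mul, intervalIntegral.integral_const_mul]
  have hT2 : (∫ u in (0:ℝ)..1,
      (Real.exp (4*π*(1-u)) + Real.exp (4*π*u)) * Real.cos (2*((n:ℝ)+1)*(2*π*(1-u))))
      = (Real.exp (4*π) - 1)/(2*π*(1+((n:ℝ)+1)^2)) := by
    have := integral_term (n+1)
    push_cast at this
    exact this
  have hT3 : (∫ u in (0:ℝ)..1,
      (Real.exp (4*π*(1-u)) + Real.exp (4*π*u)) * Real.cos (2*(2*π*(1-u))))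
      = (Real.exp (4*π) - 1)/(2*π*2) := by
    have := integral_term 1
    push_cast at this
    norm_num at this
    convert this using 3
  rw [hT2, hT3]
  have hsum : (∑ k ∈ Finset.Icc 1 n, ∫ u in (0:ℝ)..1,
      (Real.exp (4*π*(1-u)) + Real.exp (4*π*u)) * Real.cos (2*(k:ℝ)*(2*π*(1-u))))
      = ((Real.exp (4*π) - 1)/(2*π)) * ∑ k ∈ Finset.Icc 1 n, 1/(1+(k:ℝ)^2) := by
    rw [Finset.mul_sum]
    refine Finset.sum_congr rfl fun k _ => ?_
    rw [integral_term k, div_mul_div_comm, mul_one]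
  rw [hsum, sum_shift n]
  have hc : Real.exp (4*π) - 1 ≠ 0 := by
    have : (1:ℝ) < Real.exp (4*π) := by
      nlinarith [Real.add_one_le_exp (4*π), Real.pi_pos]
    linarith
  have hπ : (π:ℝ) ≠ 0 := Real.pi_ne_zero
  have hd1 : (1:ℝ) + ((n:ℝ)+1)^2 ≠ 0 := by positivity
  have hd2 : (n:ℝ)^2 + 2*n + 2 ≠ 0 := by positivity
  field_simp
  ring
end

section
/- Define the sequence of functions p_k(u) for u ∈ [0,1] by (exp(2*pi*b)-1)*p_1(u) = 1 and, for k > 1, (exp(2*pi*b)-1)*p_k(u) = (1-u)^(k-1)/(k-1)! + Σ_{j=1}^{k-1} p_j(u)/(k-j)!, where b is a complex number with exp(2*pi*b) ≠ 1. Then the exponential generating function p(x) = Σ_{k≥1} p_k(u)*x^k satisfies p(x) = -x*exp((1-u)*x)/(exp(x) - exp(2*pi*b)) as formal power series in x. -/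
/-!
Write `p(x) = x q(x)` with `q(x) = ∑ₙ pₙ₊₁ xⁿ`. The `n`-th coefficient of `q(x) eˣ` is the
convolution `∑ₖ pₖ₊₁ / (n - k)!`, so the recursion (its case `k = 1` included) says exactly that
`q(x) (e^{2πb} - eˣ) = e^{(1-u)x}` coefficientwise. Since `eˣ - e^{2πb}` has the nonzero
constant term `1 - e^{2πb}`, it is invertible, and dividing gives the claim.
-/

open PowerSeries Nat

section
variable {K : Type*} [Field K] [CharZero K]

theorem coeff_mk_mul_exp (q : ℕ → K) (n : ℕ) :
    coeff n (mk q * exp K) = ∑ k ∈ Finset.range (n + 1), q k / (n - k)! := by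
  rw [coeff_mul, Finset.Nat.sum_antidiagonal_eq_sum_range_succ_mk]
  simp [coeff_exp, div_eq_mul_inv]

theorem mk_mul_C_sub_exp {e a : K} {q : ℕ → K}
    (hq : ∀ n, (e - 1) * q n = a ^ n / n ! + ∑ k ∈ Finset.range n, q k / (n - k)!) :
    mk q * (C e - exp K) = rescale a (exp K) := by
  ext n
  rw [mul_sub, map_sub, coeff_mk_mul_exp, Finset.sum_range_succ, coeff_mul_C, coeff_rescale,
    coeff_exp]
  simp only [coeff_mk, Nat.sub_self, factorial_zero, cast_one, div_one, one_div, map_inv₀,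
    map_natCast]
  linear_combination hq n

end

theorem sum_Icc_one_eq_sum_range_succ {M : Type*} [AddCommMonoid M] (f : ℕ → M) (n : ℕ) :
    ∑ j ∈ Finset.Icc 1 n, f j = ∑ k ∈ Finset.range n, f (k + 1) := by
  rw [← Finset.Ico_add_one_right_eq_Icc, Finset.sum_Ico_eq_sum_range]
  simp [add_comm]

theorem mk_eq_X_mul_mk_succ {R : Type*} [Semiring R] (p : ℕ → R) :
    mk (fun k => if k = 0 then 0 else p k) = X * mk (fun k => p (k + 1)) := by
  ext (_ | n) <;> simp [coeff_succ_X_mul]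

open PowerSeries in
theorem generating_function_p_general (b : ℂ) (hb : Complex.exp (2 * (Real.pi : ℂ) * b) ≠ 1)
    (u : ℝ) (p : ℕ → ℂ)
    (h1 : (Complex.exp (2 * (Real.pi : ℂ) * b) - 1) * p 1 = 1)
    (hk : ∀ k : ℕ, 1 < k →
      (Complex.exp (2 * (Real.pi : ℂ) * b) - 1) * p k =
        ((1 : ℂ) - (u : ℂ)) ^ (k - 1) / ((k - 1).factorial : ℂ) +
          ∑ j ∈ Finset.Icc 1 (k - 1), p j / ((k - j).factorial : ℂ)) :
    PowerSeries.mk (fun k => if k = 0 then 0 else p k) =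
      -(PowerSeries.X * PowerSeries.rescale ((1 : ℂ) - (u : ℂ)) (PowerSeries.exp ℂ)) *
        (PowerSeries.exp ℂ - PowerSeries.C (R := ℂ) (Complex.exp (2 * (Real.pi : ℂ) * b)))⁻¹ := by
  set e := Complex.exp (2 * (Real.pi : ℂ) * b)
  have hrec : ∀ n, (e - 1) * p (n + 1) =
      (1 - (u : ℂ)) ^ n / n ! + ∑ k ∈ Finset.range n, p (k + 1) / (n - k)! := by
    intro n
    rcases n.eq_zero_or_pos with rfl | hn
    · simpa using h1
    · simpa [sum_Icc_one_eq_sum_range_succ, Nat.add_sub_add_right] using hk (n + 1) (by omega)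
  have hunit : constantCoeff (exp ℂ - C e) ≠ 0 := by
    simpa [sub_eq_zero] using hb.symm
  rw [eq_mul_inv_iff_mul_eq hunit, mk_eq_X_mul_mk_succ, ← mk_mul_C_sub_exp hrec]
  ring

open PowerSeries in
theorem generating_function_p (b : ℂ) (hb : Complex.exp (2 * (Real.pi : ℂ) * b) ≠ 1)
    (u : ℝ) (hu : u ∈ Set.Icc (0 : ℝ) 1) (p : ℕ → ℂ)
    (h1 : (Complex.exp (2 * (Real.pi : ℂ) * b) - 1) * p 1 = 1)
    (hk : ∀ k : ℕ, 1 < k →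
      (Complex.exp (2 * (Real.pi : ℂ) * b) - 1) * p k =
        ((1 : ℂ) - (u : ℂ)) ^ (k - 1) / ((k - 1).factorial : ℂ) +
          ∑ j ∈ Finset.Icc 1 (k - 1), p j / ((k - j).factorial : ℂ)) :
    PowerSeries.mk (fun k => if k = 0 then 0 else p k) =
      -(PowerSeries.X * PowerSeries.rescale ((1 : ℂ) - (u : ℂ)) (PowerSeries.exp ℂ)) *
        (PowerSeries.exp ℂ - PowerSeries.C (R := ℂ) (Complex.exp (2 * (Real.pi : ℂ) * b)))⁻¹ :=
  generating_function_p_general b hb u p h1 hk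
end

section
/- Let b be a complex number with exp(2*pi*I*b) ≠ 1, u a real parameter, and define f(x) = -I*x*exp(I*x*(1-u))/(exp(I*x) - exp(2*pi*I*b)) as a formal power series in x. Then for every k ≥ 1, the k-th Taylor coefficient satisfies f^(k)(0)/k! = I^k * exp(-2*pi*I*b) * Σ_{j=1}^{k} (δ_{1j} + Li_{-j+1}(exp(-2*pi*I*b))) * (1-u)^(k-j) / ((j-1)!*(k-j)!), where δ_{1j} is the Kronecker delta and Li_s(z) = Σ_{m≥1} z^m/m^s is the polylogarithm. -/
/-!
Put `q = e^{2πib}` and `w = q⁻¹`, so `‖w‖ < 1`. Then `1 / (e^{ix} - q) = -w / (1 - w e^{ix})`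
expands as `-w ∑ₘ wᵐ e^{imx}`, whose `n`-th coefficient is `-w iⁿ/n! ∑ₘ mⁿ wᵐ`, and
`∑ₘ m^{j-1} wᵐ = δ_{1j} + Li_{1-j}(w)`. The coefficients of `f` are then a Cauchy product with the
coefficients of `-ix e^{ix(1-u)}`.
-/

open PowerSeries PowerSeries.WithPiTopology
open scoped Nat

section

variable {𝕜 : Type*} [NormedField 𝕜]

/-- `∑_{m ≥ 0} mⁿ wᵐ`; since `0 ^ 0 = 1` this is `δ_{n0} + Li_{-n}(w)`. -/
noncomputable def powMulGeomSum (w : 𝕜) (n : ℕ) : 𝕜 := ∑' m : ℕ, (m : 𝕜) ^ n * w ^ m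

theorem powMulGeomSum_eq_ite_add_tsum {w : 𝕜} (hw : ‖w‖ < 1) (n : ℕ) :
    powMulGeomSum w n = (if n = 0 then 1 else 0) + ∑' m : ℕ, ((m : 𝕜) + 1) ^ n * w ^ (m + 1) := by
  rw [powMulGeomSum, (summable_pow_mul_geometric_of_norm_lt_one n hw).tsum_eq_zero_add]
  push_cast
  rcases eq_or_ne n 0 with rfl | hn <;> simp [*]

variable [CharZero 𝕜]

/-- The formal expansion `∑ₘ wᵐ e^{amX}` of `1 / (1 - w e^{aX})`. -/
noncomputable def geomExpSeries (a w : 𝕜) : 𝕜⟦X⟧ := mk fun n => a ^ n / n ! * powMulGeomSum w n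

theorem hasSum_geomExpSeries (a : 𝕜) {w : 𝕜} (hw : ‖w‖ < 1) :
    HasSum (fun m : ℕ => C (w ^ m) * rescale (a * m) (exp 𝕜)) (geomExpSeries a w) := by
  refine (hasSum_iff_hasSum_coeff 𝕜).mpr fun n => ?_
  simp only [geomExpSeries, coeff_C_mul, coeff_rescale, coeff_exp, coeff_mk, map_div₀, map_one,
    map_natCast]
  refine ((summable_pow_mul_geometric_of_norm_lt_one n hw).hasSum.mul_left (a ^ n / n !)).congr_fun
    fun m => ?_
  ring

theorem geomExpSeries_mul_one_sub (a : 𝕜) {w : 𝕜} (hw : ‖w‖ < 1) :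
    geomExpSeries a w * (1 - C w * rescale a (exp 𝕜)) = 1 := by
  set f := fun m : ℕ => C (w ^ m) * rescale (a * m) (exp 𝕜)
  have hf : HasSum f (geomExpSeries a w) := hasSum_geomExpSeries a hw
  -- Multiplying by `w e^{aX}` shifts the terms by one, so the product telescopes to `f 0 = 1`.
  have hshift (m : ℕ) : f m * (C w * rescale a (exp 𝕜)) = f (m + 1) := by
    simp only [f]
    rw [mul_mul_mul_comm, ← map_mul, exp_mul_exp_eq_exp_add, ← pow_succ]
    push_cast
    ring_nf
  have h_mul : HasSum (fun m => f (m + 1)) (geomExpSeries a w * (C w * rescale a (exp 𝕜))) := by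
    simpa only [hshift] using hf.mul_right (C w * rescale a (exp 𝕜))
  have h_tail : HasSum (fun m => f (m + 1)) (geomExpSeries a w - 1) := by
    simpa [f] using (hasSum_nat_add_iff' 1).mpr hf
  rw [mul_sub, mul_one, h_mul.unique h_tail, sub_sub_cancel]

theorem inv_rescale_exp_sub_C {a q w : 𝕜} (hqw : q * w = 1) (hw : ‖w‖ < 1) :
    (rescale a (exp 𝕜) - C q)⁻¹ = -C w * geomExpSeries a w := by
  have hCqw : C w * C q = 1 := by rw [← map_mul, mul_comm, hqw, map_one]
  have hmul : (-C w * geomExpSeries a w) * (rescale a (exp 𝕜) - C q) = 1 := by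
    rw [← geomExpSeries_mul_one_sub a hw]
    linear_combination geomExpSeries a w * hCqw
  have hconst := congrArg constantCoeff hmul
  rw [map_mul, map_one] at hconst
  exact (inv_eq_iff_mul_eq_one (right_ne_zero_of_mul_eq_one hconst)).mpr hmul

theorem coeff_mul_rescale_exp (F : 𝕜⟦X⟧) (c : 𝕜) (n : ℕ) :
    coeff n (F * rescale c (exp 𝕜)) =
      ∑ i ∈ Finset.range (n + 1), coeff i F * c ^ (n - i) / (n - i) ! := by
  rw [coeff_mul, Finset.Nat.sum_antidiagonal_eq_sum_range_succ_mk]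
  refine Finset.sum_congr rfl fun i _ => ?_
  simp only [coeff_rescale, coeff_exp, map_div₀, map_one, map_natCast]
  ring

end

open PowerSeries in
theorem taylor_coefficients_f_general (b : ℂ)
    (habs : ‖Complex.exp (-(2 * (Real.pi : ℂ) * Complex.I * b))‖ < 1)
    (u : ℝ) (k : ℕ) (hk : 1 ≤ k) :
    PowerSeries.coeff k
        (-(PowerSeries.X * PowerSeries.rescale (Complex.I * ((1 : ℂ) - (u : ℂ))) (PowerSeries.exp ℂ)) *
          (PowerSeries.rescale Complex.I (PowerSeries.exp ℂ) -
            PowerSeries.C (Complex.exp (2 * (Real.pi : ℂ) * Complex.I * b)))⁻¹ *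
          PowerSeries.C Complex.I) =
      Complex.I ^ k * Complex.exp (-(2 * (Real.pi : ℂ) * Complex.I * b)) *
        ∑ j ∈ Finset.Icc 1 k,
          ((if j = 1 then (1 : ℂ) else 0) +
              ∑' m : ℕ, ((m : ℂ) + 1) ^ (j - 1) *
                Complex.exp (-(2 * (Real.pi : ℂ) * Complex.I * b)) ^ (m + 1)) *
            ((1 : ℂ) - (u : ℂ)) ^ (k - j) / (((j - 1).factorial : ℂ) * ((k - j).factorial : ℂ)) := by
  set w := Complex.exp (-(2 * (Real.pi : ℂ) * Complex.I * b))
  have hqw : Complex.exp (2 * (Real.pi : ℂ) * Complex.I * b) * w = 1 := by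
    rw [← Complex.exp_add, add_neg_cancel, Complex.exp_zero]
  have hrearrange (E G : ℂ⟦X⟧) :
      -(X * E) * (-C w * G) * C Complex.I = X * (C (Complex.I * w) * (G * E)) := by
    rw [map_mul]
    ring
  obtain ⟨n, rfl⟩ := Nat.exists_eq_add_of_le' hk
  rw [inv_rescale_exp_sub_C hqw habs, hrearrange, coeff_succ_X_mul, coeff_C_mul,
    coeff_mul_rescale_exp, ← Finset.Ico_add_one_right_eq_Icc, Finset.sum_Ico_eq_sum_range,
    add_tsub_cancel_right, Finset.mul_sum, Finset.mul_sum]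
  refine Finset.sum_congr rfl fun i hi => ?_
  have hin : i ≤ n := Nat.lt_succ_iff.mp (Finset.mem_range.mp hi)
  rw [add_tsub_cancel_left, show n + 1 - (1 + i) = n - i by omega]
  simp only [add_eq_left]
  rw [← powMulGeomSum_eq_ite_add_tsum habs, geomExpSeries, coeff_mk, mul_pow,
    show Complex.I ^ (n + 1) = Complex.I * Complex.I ^ i * Complex.I ^ (n - i) by
      rw [mul_assoc, ← pow_add, Nat.add_sub_cancel' hin, pow_succ']]
  ring

open PowerSeries in
theorem taylor_coefficients_f (b : ℂ)
    (hb : Complex.exp (2 * (Real.pi : ℂ) * Complex.I * b) ≠ 1)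
    (habs : ‖Complex.exp (-(2 * (Real.pi : ℂ) * Complex.I * b))‖ < 1)
    (u : ℝ) (k : ℕ) (hk : 1 ≤ k) :
    PowerSeries.coeff k
        (-(PowerSeries.X * PowerSeries.rescale (Complex.I * ((1 : ℂ) - (u : ℂ))) (PowerSeries.exp ℂ)) *
          (PowerSeries.rescale Complex.I (PowerSeries.exp ℂ) -
            PowerSeries.C (Complex.exp (2 * (Real.pi : ℂ) * Complex.I * b)))⁻¹ *
          PowerSeries.C Complex.I) =
      Complex.I ^ k * Complex.exp (-(2 * (Real.pi : ℂ) * Complex.I * b)) *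
        ∑ j ∈ Finset.Icc 1 k,
          ((if j = 1 then (1 : ℂ) else 0) +
              ∑' m : ℕ, ((m : ℂ) + 1) ^ (j - 1) *
                Complex.exp (-(2 * (Real.pi : ℂ) * Complex.I * b)) ^ (m + 1)) *
            ((1 : ℂ) - (u : ℂ)) ^ (k - j) / (((j - 1).factorial : ℂ) * ((k - j).factorial : ℂ)) :=
  taylor_coefficients_f_general b habs u k hk
end
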